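/- Let g ≥ 2. Let α₁(x) = x_0 and α₀(x) = x_0 + x_1 be linear forms on V = (Fin (g+1) → ZMod 2). For i ∈ {0,1}, if θ is any linear form on V with θ ≠ θ₀, θ ≠ θ₁ and ∑_{j=0}^{g} θ(e_j) = i (i.e. θ lies in the orbit orb_i of α_i), then the stabilizer Iso_θ is conjugate in O(V) to Iso_{α_i}: there exists S ∈ O(V) with Iso_θ = S · Iso_{α_i} · S⁻¹. -/

import Mathlib

/-!
Write `θ = ⟨a, ·⟩`. An orthogonal `S` with `θ ∘ S = ⟨b, ·⟩` conjugates `Iso_θ` onto the isotropy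
group of `⟨b, ·⟩`, and such an `S` exists as soon as `b` lies in the `O(V)`-orbit of `a`.
Orbits are connected by reflections `y ↦ y - ⟨v, y⟩ v` with `⟨v, v⟩ = 2` (transvections in
characteristic `2`): the reflection in `u - w` maps `u` to `w` whenever
`⟨u, u⟩ = ⟨w, w⟩ = 1 + ⟨u, w⟩`. Over `ZMod 2` we have `⟨a, a⟩ = ∑ aᵢ` and `0 = 2`; `a ≠ 0, 𝟙` has
coordinates `aᵢ = 1`, `aⱼ = 0`; one reflection moves `a` to `eⱼ` if `∑ aᵢ = 1`, and to `eᵢ + eⱼ`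
if `∑ aᵢ = 0`. Further reflections permute the `eₖ`, resp. the `eₖ + eₗ`, transitively.
-/

open Matrix MulAction

lemma MulAction.mem_orbit_trans {G α : Type*} [Group G] [MulAction G α] {a b c : α}
    (hab : b ∈ orbit G a) (hbc : c ∈ orbit G b) : c ∈ orbit G a :=
  orbit_eq_iff.mpr hab ▸ hbc

namespace Matrix

variable (ι R : Type*) [Fintype ι] [CommRing R]

def dotOrthogonalGroup : Subgroup ((ι → R) ≃ₗ[R] (ι → R)) where
  carrier := {S | ∀ x y, S x ⬝ᵥ S y = x ⬝ᵥ y}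
  mul_mem' {S T} hS hT x y := (hS (T x) (T y)).trans (hT x y)
  one_mem' _ _ := rfl
  inv_mem' {S} hS x y := by
    rw [← hS, LinearEquiv.coe_inv, S.apply_symm_apply, S.apply_symm_apply]

namespace dotOrthogonalGroup

variable {ι R}

lemma exists_mem_dotProduct_apply {a b : ι → R} (hb : b ∈ orbit (dotOrthogonalGroup ι R) a) :
    ∃ S ∈ dotOrthogonalGroup ι R, ∀ x, a ⬝ᵥ S x = b ⬝ᵥ x := by
  obtain ⟨⟨T, hT⟩, rfl⟩ := hb
  refine ⟨T⁻¹, inv_mem hT, fun x => ?_⟩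
  simpa using (hT a (T⁻¹ x)).symm

lemma setOf_isotropy_eq_conj {X : Type*} {θ α : (ι → R) → X} {S : (ι → R) ≃ₗ[R] (ι → R)}
    (hS : S ∈ dotOrthogonalGroup ι R) (hSθ : ∀ x, θ (S x) = α x) :
    {F | F ∈ dotOrthogonalGroup ι R ∧ ∀ x, θ (F x) = θ x} =
      {F | ∃ G, (G ∈ dotOrthogonalGroup ι R ∧ ∀ x, α (G x) = α x) ∧
        ∀ x, F x = S (G (S.symm x))} := by
  ext F
  constructor
  · rintro ⟨hF, hFθ⟩
    refine ⟨S⁻¹ * F * S, ⟨mul_mem (mul_mem (inv_mem hS) hF) hS, fun x => ?_⟩, fun x => ?_⟩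
    · simp [← hSθ, hFθ]
    · simp
  · rintro ⟨G, ⟨hG, hGα⟩, hFG⟩
    have hF : F = S * G * S⁻¹ := LinearEquiv.ext hFG
    refine ⟨hF ▸ mul_mem (mul_mem hS hG) (inv_mem hS), fun x => ?_⟩
    rw [hFG, hSθ, hGα, ← hSθ, S.apply_symm_apply]

lemma isotropy_conj_of_mem_orbit {a b : ι → R} {α : (ι → R) → R} (hα : ∀ x, α x = b ⬝ᵥ x)
    (hb : b ∈ orbit (dotOrthogonalGroup ι R) a) :
    ∃ S ∈ dotOrthogonalGroup ι R,
      {F | F ∈ dotOrthogonalGroup ι R ∧ ∀ x, a ⬝ᵥ F x = a ⬝ᵥ x} =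
        {F | ∃ G, (G ∈ dotOrthogonalGroup ι R ∧ ∀ x, α (G x) = α x) ∧
          ∀ x, F x = S (G (S.symm x))} := by
  obtain ⟨S, hS, hSb⟩ := exists_mem_dotProduct_apply hb
  exact ⟨S, hS, setOf_isotropy_eq_conj hS fun x => (hSb x).trans (hα x).symm⟩

variable [DecidableEq ι]

lemma reflection_mem {v : ι → R} (hv : dotProductEquiv R ι v v = 2) :
    Module.reflection hv ∈ dotOrthogonalGroup ι R := by
  intro x y
  show (x - (v ⬝ᵥ x) • v) ⬝ᵥ (y - (v ⬝ᵥ y) • v) = x ⬝ᵥ y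
  simp only [sub_dotProduct, dotProduct_sub, smul_dotProduct, dotProduct_smul, smul_eq_mul,
    dotProduct_comm x v, dotProduct_comm v y, show v ⬝ᵥ v = 2 from hv]
  ring

lemma mem_orbit_of_dotProduct_self {u w : ι → R} (hu : u ⬝ᵥ u = 1 + u ⬝ᵥ w)
    (hw : w ⬝ᵥ w = 1 + u ⬝ᵥ w) : w ∈ orbit (dotOrthogonalGroup ι R) u := by
  have hv : (u - w) ⬝ᵥ (u - w) = 2 := by
    simp only [sub_dotProduct, dotProduct_sub, hu, hw, dotProduct_comm w u]
    ring
  have hvu : (u - w) ⬝ᵥ u = 1 := by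
    rw [sub_dotProduct, hu, dotProduct_comm w u]
    ring
  refine ⟨⟨Module.reflection (f := dotProductEquiv R ι (u - w)) hv, reflection_mem hv⟩, ?_⟩
  show u - ((u - w) ⬝ᵥ u) • (u - w) = w
  rw [hvu, one_smul, sub_sub_cancel]

lemma single_mem_orbit_single (i j : ι) :
    (Pi.single j 1 : ι → R) ∈ orbit (dotOrthogonalGroup ι R) (Pi.single i 1 : ι → R) := by
  obtain rfl | hij := eq_or_ne i j
  · exact mem_orbit_self _
  · exact mem_orbit_of_dotProduct_self (by simp [hij.symm]) (by simp [hij.symm])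

lemma pair_mem_orbit_pair_of_eq_left {i j k : ι} (hij : i ≠ j) (hik : i ≠ k) :
    (Pi.single i 1 + Pi.single k 1 : ι → R) ∈
      orbit (dotOrthogonalGroup ι R) (Pi.single i 1 + Pi.single j 1 : ι → R) := by
  obtain rfl | hjk := eq_or_ne j k
  · exact mem_orbit_self _
  · exact mem_orbit_of_dotProduct_self
      (by simp [dotProduct_add, hij.symm, hik.symm, hjk.symm, one_add_one_eq_two])
      (by simp [dotProduct_add, hij.symm, hik.symm, hjk.symm, one_add_one_eq_two])

lemma pair_mem_orbit_pair {i j k l : ι} (hij : i ≠ j) (hkl : k ≠ l) :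
    (Pi.single k 1 + Pi.single l 1 : ι → R) ∈
      orbit (dotOrthogonalGroup ι R) (Pi.single i 1 + Pi.single j 1 : ι → R) := by
  obtain rfl | hil := eq_or_ne i l
  · rw [add_comm (Pi.single k 1)]
    exact pair_mem_orbit_pair_of_eq_left hij hkl.symm
  · have hlik : (Pi.single l 1 + Pi.single k 1 : ι → R) ∈
        orbit (dotOrthogonalGroup ι R) (Pi.single l 1 + Pi.single i 1 : ι → R) :=
      pair_mem_orbit_pair_of_eq_left hil.symm hkl.symm
    rw [add_comm, add_comm (Pi.single l 1)] at hlik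
    exact mem_orbit_trans (pair_mem_orbit_pair_of_eq_left hij hil) hlik

lemma single_mem_orbit_of_apply_eq_zero {a : ι → R} (ha : a ⬝ᵥ a = 1) {j : ι} (hj : a j = 0) :
    (Pi.single j 1 : ι → R) ∈ orbit (dotOrthogonalGroup ι R) a :=
  mem_orbit_of_dotProduct_self (by simp [ha, hj]) (by simp [hj])

lemma pair_mem_orbit_of_apply {a : ι → R} (ha : a ⬝ᵥ a = 2) {i j : ι} (hij : i ≠ j)
    (hi : a i = 1) (hj : a j = 0) :
    (Pi.single i 1 + Pi.single j 1 : ι → R) ∈ orbit (dotOrthogonalGroup ι R) a :=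
  mem_orbit_of_dotProduct_self (by simp [ha, hi, hj, dotProduct_add, one_add_one_eq_two])
    (by simp [dotProduct_add, hi, hj, hij, hij.symm, one_add_one_eq_two])

end dotOrthogonalGroup

end Matrix

lemma ZMod.dotProduct_self_eq_sum {ι : Type*} [Fintype ι] (a : ι → ZMod 2) :
    a ⬝ᵥ a = ∑ i, a i :=
  Finset.sum_congr rfl fun i _ => by generalize a i = z; revert z; decide

lemma ZMod.exists_apply_eq_one_of_ne_zero {ι : Type*} {a : ι → ZMod 2} (ha : a ≠ 0) :
    ∃ i, a i = 1 :=
  (Function.ne_iff.mp ha).imp fun i => Fin.eq_one_of_ne_zero (a i)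

lemma ZMod.exists_apply_eq_zero_of_ne_one {ι : Type*} {a : ι → ZMod 2} (ha : a ≠ 1) :
    ∃ i, a i = 0 :=
  (Function.ne_iff.mp ha).imp fun i (hi : a i ≠ 1) => by
    revert hi; generalize a i = z; revert z; decide

open Matrix.dotOrthogonalGroup in
theorem isotropy_conjugate_general (g : ℕ)
    (θ : (Fin (g + 1) → ZMod 2) →ₗ[ZMod 2] ZMod 2)
    (hθ0 : θ ≠ 0)
    (hθ1 : ⇑θ ≠ fun x : Fin (g + 1) → ZMod 2 => ∑ i, x i) :
    (∑ i, θ (Pi.single i (1 : ZMod 2)) = 0 →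
      ∃ S : (Fin (g + 1) → ZMod 2) ≃ₗ[ZMod 2] (Fin (g + 1) → ZMod 2),
        (∀ x y : Fin (g + 1) → ZMod 2, ∑ i, S x i * S y i = ∑ i, x i * y i) ∧
        {F : (Fin (g + 1) → ZMod 2) ≃ₗ[ZMod 2] (Fin (g + 1) → ZMod 2) |
            (∀ x y : Fin (g + 1) → ZMod 2, ∑ i, F x i * F y i = ∑ i, x i * y i) ∧
            ∀ x : Fin (g + 1) → ZMod 2, θ (F x) = θ x} =
          {F | ∃ G : (Fin (g + 1) → ZMod 2) ≃ₗ[ZMod 2] (Fin (g + 1) → ZMod 2),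
            ((∀ x y : Fin (g + 1) → ZMod 2, ∑ i, G x i * G y i = ∑ i, x i * y i) ∧
              ∀ x : Fin (g + 1) → ZMod 2, G x 0 + G x 1 = x 0 + x 1) ∧
            ∀ x : Fin (g + 1) → ZMod 2, F x = S (G (S.symm x))}) ∧
    (∑ i, θ (Pi.single i (1 : ZMod 2)) = 1 →
      ∃ S : (Fin (g + 1) → ZMod 2) ≃ₗ[ZMod 2] (Fin (g + 1) → ZMod 2),
        (∀ x y : Fin (g + 1) → ZMod 2, ∑ i, S x i * S y i = ∑ i, x i * y i) ∧
        {F : (Fin (g + 1) → ZMod 2) ≃ₗ[ZMod 2] (Fin (g + 1) → ZMod 2) |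
            (∀ x y : Fin (g + 1) → ZMod 2, ∑ i, F x i * F y i = ∑ i, x i * y i) ∧
            ∀ x : Fin (g + 1) → ZMod 2, θ (F x) = θ x} =
          {F | ∃ G : (Fin (g + 1) → ZMod 2) ≃ₗ[ZMod 2] (Fin (g + 1) → ZMod 2),
            ((∀ x y : Fin (g + 1) → ZMod 2, ∑ i, G x i * G y i = ∑ i, x i * y i) ∧
              ∀ x : Fin (g + 1) → ZMod 2, G x 0 = x 0) ∧
            ∀ x : Fin (g + 1) → ZMod 2, F x = S (G (S.symm x))}) := by
  obtain ⟨a, rfl⟩ := (dotProductEquiv (ZMod 2) (Fin (g + 1))).surjective θ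
  have ha : a ⬝ᵥ a = ∑ i, dotProductEquiv (ZMod 2) (Fin (g + 1)) a (Pi.single i 1) := by
    simp [ZMod.dotProduct_self_eq_sum]
  obtain ⟨i, hi⟩ := ZMod.exists_apply_eq_one_of_ne_zero (a := a) fun h => hθ0 (by simp [h])
  obtain ⟨j, hj⟩ := ZMod.exists_apply_eq_zero_of_ne_one (a := a) fun h =>
    hθ1 (funext fun x => by simp [h, one_dotProduct])
  refine ⟨fun hsum => ?_, fun hsum => ?_⟩
  · have hij : i ≠ j := fun h => by simp [h, hj] at hi
    have : NeZero g := ⟨by rintro rfl; exact hij (Subsingleton.elim (α := Fin 1) i j)⟩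
    have haa : a ⬝ᵥ a = 2 := ha.trans (hsum.trans (by decide))
    exact isotropy_conj_of_mem_orbit (α := fun x => x 0 + x 1)
      (b := Pi.single 0 1 + Pi.single 1 1) (fun x => by simp [add_dotProduct])
      (mem_orbit_trans (pair_mem_orbit_of_apply haa hij hi hj)
        (pair_mem_orbit_pair hij Fin.zero_ne_one'))
  · exact isotropy_conj_of_mem_orbit (α := fun x => x 0) (b := Pi.single 0 1) (fun x => by simp)
      (mem_orbit_trans (single_mem_orbit_of_apply_eq_zero (ha.trans hsum) hj)
        (single_mem_orbit_single j 0))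

/-- For `g ≥ 2`, let `α₀ : x ↦ x 0 + x 1` and `α₁ : x ↦ x 0` on `V = Fin (g+1) → ZMod 2`.
For `i ∈ {0,1}`, if `θ` is a linear form with `θ ≠ θ₀`, `θ ≠ θ₁` and `∑ⱼ θ(eⱼ) = i`
(i.e. `θ ∈ orb_i`), then the isotropy subgroup `Iso_θ` is conjugate in `O(V)` to
`Iso_{α_i}`: there is an orthogonal `S` with `Iso_θ = S · Iso_{α_i} · S⁻¹`. -/
theorem isotropy_conjugate (g : ℕ) (hg : 2 ≤ g)
    (θ : (Fin (g + 1) → ZMod 2) →ₗ[ZMod 2] ZMod 2)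
    (hθ0 : θ ≠ 0)
    (hθ1 : ⇑θ ≠ fun x : Fin (g + 1) → ZMod 2 => ∑ i, x i) :
    (∑ i, θ (Pi.single i (1 : ZMod 2)) = 0 →
      ∃ S : (Fin (g + 1) → ZMod 2) ≃ₗ[ZMod 2] (Fin (g + 1) → ZMod 2),
        (∀ x y : Fin (g + 1) → ZMod 2, ∑ i, S x i * S y i = ∑ i, x i * y i) ∧
        {F : (Fin (g + 1) → ZMod 2) ≃ₗ[ZMod 2] (Fin (g + 1) → ZMod 2) |
            (∀ x y : Fin (g + 1) → ZMod 2, ∑ i, F x i * F y i = ∑ i, x i * y i) ∧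
            ∀ x : Fin (g + 1) → ZMod 2, θ (F x) = θ x} =
          {F | ∃ G : (Fin (g + 1) → ZMod 2) ≃ₗ[ZMod 2] (Fin (g + 1) → ZMod 2),
            ((∀ x y : Fin (g + 1) → ZMod 2, ∑ i, G x i * G y i = ∑ i, x i * y i) ∧
              ∀ x : Fin (g + 1) → ZMod 2, G x 0 + G x 1 = x 0 + x 1) ∧
            ∀ x : Fin (g + 1) → ZMod 2, F x = S (G (S.symm x))}) ∧
    (∑ i, θ (Pi.single i (1 : ZMod 2)) = 1 →
      ∃ S : (Fin (g + 1) → ZMod 2) ≃ₗ[ZMod 2] (Fin (g + 1) → ZMod 2),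
        (∀ x y : Fin (g + 1) → ZMod 2, ∑ i, S x i * S y i = ∑ i, x i * y i) ∧
        {F : (Fin (g + 1) → ZMod 2) ≃ₗ[ZMod 2] (Fin (g + 1) → ZMod 2) |
            (∀ x y : Fin (g + 1) → ZMod 2, ∑ i, F x i * F y i = ∑ i, x i * y i) ∧
            ∀ x : Fin (g + 1) → ZMod 2, θ (F x) = θ x} =
          {F | ∃ G : (Fin (g + 1) → ZMod 2) ≃ₗ[ZMod 2] (Fin (g + 1) → ZMod 2),
            ((∀ x y : Fin (g + 1) → ZMod 2, ∑ i, G x i * G y i = ∑ i, x i * y i) ∧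
              ∀ x : Fin (g + 1) → ZMod 2, G x 0 = x 0) ∧
            ∀ x : Fin (g + 1) → ZMod 2, F x = S (G (S.symm x))}) :=
  isotropy_conjugate_general g θ hθ0 hθ1
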